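/- In Setup B, let J₁, J₂ ∈ Λ with integer data c¹ = (c¹_i)_{i∈J₁} and c² = (c²_i)_{i∈J₂} (and a choice of i₀ ∈ I'∖J made for each of J₁, J₂ that contains n+1, defining the corresponding F-set). If C(J₁,c¹) ⊆ C(J₂,c²), then F(J₁,c¹) ⊆ F(J₂,c²). -/

import Mathlib

open scoped RealInnerProductSpace BigOperators

noncomputable section

/-- Euclidean space `ℝⁿ` with the standard inner product. -/
abbrev E (n : ℕ) : Type := EuclideanSpace ℝ (Fin n)

/-- The index set `I' = {1,…,n'}` inside `Ī = {1,…,n+1}` (index `Fin.last n`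
plays the role of `n+1`). -/
def Iprime (n n' : ℕ) : Finset (Fin (n + 1)) := Finset.univ.filter fun i => i.val < n'

/-- `C(J,c) := {x ∈ ℝⁿ : ⟨x, b_i⟩ > c_i for all i ∈ J}`. -/
def CSet (n : ℕ) (b : Fin (n + 1) → E n) (J : Finset (Fin (n + 1)))
    (c : Fin (n + 1) → ℤ) : Set (E n) :=
  {x | ∀ i ∈ J, (c i : ℝ) < ⟪x, b i⟫}

/-- A multi-index `𝔪 = (m_i)_{i ∈ I'∖{i₀}}` is admissible if `m_i ≥ 0` for every
`i ∈ I' ∩ J` (recall `i₀ ∉ J`). -/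
def Admissible (n n' : ℕ) (J : Finset (Fin (n + 1))) (m : Fin (n + 1) → ℤ) : Prop :=
  ∀ i ∈ Iprime n n' ∩ J, 0 ≤ m i

/-- The ceiling bound
`⌈(c_{n+1} − Σ_{i∈I'∩J} α_i(c_i+m_i) − Σ_{i∈I'∩K₁} α_i m_i)/α_{i₀}⌉`,
where `K₁ = Ī∖(J∪{i₀})`, so `I'∩K₁ = (I'∖J)∖{i₀}`. -/
def ceilB (n n' : ℕ) (α : Fin (n + 1) → ℚ) (J : Finset (Fin (n + 1)))
    (i₀ : Fin (n + 1)) (c m : Fin (n + 1) → ℤ) : ℤ :=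
  ⌈((c (Fin.last n) : ℚ) - ∑ i ∈ Iprime n n' ∩ J, α i * ((c i : ℚ) + (m i : ℚ))
      - ∑ i ∈ (Iprime n n' \ J).erase i₀, α i * (m i : ℚ)) / α i₀⌉

/-- `V(J,c,𝔪)` as in Setup B. -/
def VSet (n n' : ℕ) (b : Fin (n + 1) → E n) (α : Fin (n + 1) → ℚ)
    (J : Finset (Fin (n + 1))) (i₀ : Fin (n + 1)) (c m : Fin (n + 1) → ℤ) :
    Set (E n) :=
  {x | (∀ i ∈ Iprime n n' ∩ J, ((c i : ℝ) + (m i : ℝ)) < ⟪x, b i⟫)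
    ∧ (∀ i ∈ (Iprime n n' \ J).erase i₀, (m i : ℝ) < ⟪x, b i⟫)
    ∧ (∀ i ∈ (J \ Iprime n n').erase (Fin.last n), (c i : ℝ) < ⟪x, b i⟫)
    ∧ ((ceilB n n' α J i₀ c m : ℝ) < ⟪x, b i₀⟫)}

/-- `F(J,c) := ⋃_{𝔪 admissible} V(J,c,𝔪)` (for `n+1 ∈ J`, with the choice `i₀`). -/
def FSetB (n n' : ℕ) (b : Fin (n + 1) → E n) (α : Fin (n + 1) → ℚ)
    (J : Finset (Fin (n + 1))) (i₀ : Fin (n + 1)) (c : Fin (n + 1) → ℤ) : Set (E n) :=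
  {x | ∃ m : Fin (n + 1) → ℤ, Admissible n n' J m ∧ x ∈ VSet n n' b α J i₀ c m}

/-- `F(J,c)` in general: the union above when `n+1 ∈ J`, and `C(J,c)` otherwise. -/
def FSetB' (n n' : ℕ) (b : Fin (n + 1) → E n) (α : Fin (n + 1) → ℚ)
    (J : Finset (Fin (n + 1))) (i₀ : Fin (n + 1)) (c : Fin (n + 1) → ℤ) : Set (E n) :=
  if Fin.last n ∈ J then FSetB n n' b α J i₀ c else CSet n b J c

/-
In the coordinates `yᵢ = ⟪x, bᵢ⟫`, `i ≤ n`, which are free since the `bᵢ` form a basis, we have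
`⟪x, b_{n+1}⟫ = Σ_{I'} αᵢ yᵢ`. Unfolding the ceiling, `x ∈ V(J,c,𝔪)` says exactly that the
integers `Lᵢ` (`cᵢ + mᵢ` on `I' ∩ J`, the ceiling at `i₀`, `mᵢ` elsewhere on `I'`) bound the
`yᵢ`, `i ∈ I'`, strictly from below and satisfy `Σ_{I'} αᵢ Lᵢ ≥ c_{n+1}`. Hence `F(J,c)` is the
union of the boxes `{yᵢ > Lᵢ, i ∈ I'}` over integer vectors `L ≥ c` on `I' ∩ J` with
`Σ_{I'} αᵢ Lᵢ ≥ c_{n+1}`, cut by the remaining conditions of `C(J,c)`. This description does not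
involve `i₀`, lies inside `C(J,c)`, and is monotone in `(J, c)` as long as `n+1 ∈ J`.
Finally `C(J₁,c¹) ⊆ C(J₂,c²)` forces `J₂ ⊆ J₁` and `c² ≤ c¹` on `J₂`: otherwise moving along a
dual vector `b_k*`, `k ∈ I' \ J₁` (resp. `k ∈ I' \ J₂`), yields a point of `C(J₁,c¹)` outside
`C(J₂,c²)`.
-/

open Finset

lemma mem_Iprime {n n' : ℕ} {i : Fin (n + 1)} : i ∈ Iprime n n' ↔ i.val < n' := by
  simp [Iprime]

lemma last_notMem_Iprime {n n' : ℕ} (hn'n : n' ≤ n) : Fin.last n ∉ Iprime n n' := by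
  simp [mem_Iprime, hn'n]

lemma exists_inner_basis_eq {F ι : Type*} [NormedAddCommGroup F] [InnerProductSpace ℝ F]
    [FiniteDimensional ℝ F] (B : Module.Basis ι ℝ F) (y : ι → ℝ) :
    ∃ x : F, ∀ i, ⟪x, B i⟫ = y i :=
  ⟨(InnerProductSpace.toDual ℝ F).symm (LinearMap.toContinuousLinearMap (B.constr ℝ y)),
    fun i => by rw [InnerProductSpace.toDual_symm_apply]; exact B.constr_basis ℝ y i⟩

section

variable {n n' : ℕ} {b : Fin (n + 1) → E n} {α : Fin (n + 1) → ℚ}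

lemma inner_last (hlast : b (Fin.last n) = ∑ i ∈ Iprime n n', (α i : ℝ) • b i) (x : E n) :
    ⟪x, b (Fin.last n)⟫ = ∑ i ∈ Iprime n n', (α i : ℝ) * ⟪x, b i⟫ := by
  simp only [hlast, inner_sum, real_inner_smul_right]

lemma exists_inner_eq_of_ne_last (hb : LinearIndependent ℝ fun i : Fin n => b i.castSucc)
    (hspan : Submodule.span ℝ (Set.range fun i : Fin n => b i.castSucc) = ⊤)
    (y : Fin (n + 1) → ℝ) : ∃ x : E n, ∀ i ≠ Fin.last n, ⟪x, b i⟫ = y i := by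
  obtain ⟨x, hx⟩ := exists_inner_basis_eq (Module.Basis.mk hb hspan.ge) (y ∘ Fin.castSucc)
  refine ⟨x, fun i hi => ?_⟩
  simpa using hx (i.castPred hi)

lemma exists_dual_basis_vector (hn'n : n' ≤ n)
    (hb : LinearIndependent ℝ fun i : Fin n => b i.castSucc)
    (hspan : Submodule.span ℝ (Set.range fun i : Fin n => b i.castSucc) = ⊤)
    (hlast : b (Fin.last n) = ∑ i ∈ Iprime n n', (α i : ℝ) • b i)
    {k : Fin (n + 1)} (hk : k ∈ Iprime n n') :
    ∃ z : E n, (∀ i ≠ Fin.last n, ⟪z, b i⟫ = if i = k then 1 else 0) ∧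
      ⟪z, b (Fin.last n)⟫ = α k := by
  obtain ⟨z, hz⟩ := exists_inner_eq_of_ne_last hb hspan fun i => if i = k then 1 else 0
  refine ⟨z, hz, ?_⟩
  rw [inner_last hlast,
    sum_congr rfl fun i hi => by rw [hz i (ne_of_mem_of_not_mem hi (last_notMem_Iprime hn'n))]]
  simp [hk]

lemma exists_mem_CSet_inner_last_eq (hn'n : n' ≤ n)
    (hb : LinearIndependent ℝ fun i : Fin n => b i.castSucc)
    (hspan : Submodule.span ℝ (Set.range fun i : Fin n => b i.castSucc) = ⊤)
    (hlast : b (Fin.last n) = ∑ i ∈ Iprime n n', (α i : ℝ) • b i)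
    {J : Finset (Fin (n + 1))} {c : Fin (n + 1) → ℤ}
    {k : Fin (n + 1)} (hk : k ∈ Iprime n n' \ J) (hαk : 0 < α k) (t : ℝ)
    (ht : Fin.last n ∈ J → (c (Fin.last n) : ℝ) < t) :
    ∃ x ∈ CSet n b J c, ⟪x, b (Fin.last n)⟫ = t := by
  obtain ⟨hkI, hkJ⟩ := mem_sdiff.mp hk
  obtain ⟨x₀, hx₀⟩ := exists_inner_eq_of_ne_last hb hspan fun i => (c i : ℝ) + 1
  obtain ⟨z, hz, hzl⟩ := exists_dual_basis_vector hn'n hb hspan hlast hkI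
  have hαk' : (0 : ℝ) < α k := by exact_mod_cast hαk
  set s := (t - ⟪x₀, b (Fin.last n)⟫) / α k
  have hl : ⟪x₀ + s • z, b (Fin.last n)⟫ = t := by
    rw [inner_add_left, real_inner_smul_left, hzl, div_mul_cancel₀ _ hαk'.ne']
    ring
  refine ⟨x₀ + s • z, fun i hi => ?_, hl⟩
  by_cases hil : i = Fin.last n
  · subst hil
    exact hl ▸ ht hi
  · have hik : i ≠ k := fun h => hkJ (h ▸ hi)
    rw [inner_add_left, real_inner_smul_left, hx₀ i hil, hz i hil, if_neg hik]
    linarith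

lemma exists_mem_CSet_inner_eq (hn'n : n' ≤ n)
    (hb : LinearIndependent ℝ fun i : Fin n => b i.castSucc)
    (hspan : Submodule.span ℝ (Set.range fun i : Fin n => b i.castSucc) = ⊤)
    (hlast : b (Fin.last n) = ∑ i ∈ Iprime n n', (α i : ℝ) • b i)
    {J : Finset (Fin (n + 1))} {c : Fin (n + 1) → ℤ}
    {j k : Fin (n + 1)} (hj : j ≠ Fin.last n) (hk : k ∈ Iprime n n') (hkj : k ≠ j)
    (hαk : 0 < α k) (t : ℝ) (ht : j ∈ J → (c j : ℝ) < t) :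
    ∃ x ∈ CSet n b J c, ⟪x, b j⟫ = t := by
  obtain ⟨x₀, hx₀⟩ := exists_inner_eq_of_ne_last hb hspan
    fun i => if i = j then t else (c i : ℝ) + 1
  obtain ⟨z, hz, hzl⟩ := exists_dual_basis_vector hn'n hb hspan hlast hk
  have hαk' : (0 : ℝ) < α k := by exact_mod_cast hαk
  set s := max 0 (((c (Fin.last n) : ℝ) + 1 - ⟪x₀, b (Fin.last n)⟫) / α k)
  have hs : 0 ≤ s := le_max_left _ _
  have hinner : ∀ i ≠ Fin.last n, ⟪x₀, b i⟫ ≤ ⟪x₀ + s • z, b i⟫ := fun i hi => by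
    rw [inner_add_left, real_inner_smul_left, hz i hi]
    split_ifs <;> simp [hs]
  refine ⟨x₀ + s • z, fun i hi => ?_, ?_⟩
  · by_cases hil : i = Fin.last n
    · subst hil
      have : (c (Fin.last n) : ℝ) + 1 - ⟪x₀, b (Fin.last n)⟫ ≤ s * α k :=
        (div_le_iff₀ hαk').mp (le_max_right _ _)
      rw [inner_add_left, real_inner_smul_left, hzl]
      linarith
    · refine lt_of_lt_of_le ?_ (hinner i hil)
      rw [hx₀ i hil]
      split_ifs with hij
      · exact hij ▸ ht (hij ▸ hi)
      · linarith
  · rw [inner_add_left, real_inner_smul_left, hx₀ j hj, hz j hj, if_neg hkj.symm]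
    simp

lemma mem_and_le_of_CSet_subset (hn'n : n' ≤ n)
    (hb : LinearIndependent ℝ fun i : Fin n => b i.castSucc)
    (hspan : Submodule.span ℝ (Set.range fun i : Fin n => b i.castSucc) = ⊤)
    (hlast : b (Fin.last n) = ∑ i ∈ Iprime n n', (α i : ℝ) • b i)
    (hα : ∀ i ∈ Iprime n n', 0 < α i)
    {J₁ J₂ : Finset (Fin (n + 1))} (hJ₁ : ¬ Iprime n n' ⊆ J₁) (hJ₂ : ¬ Iprime n n' ⊆ J₂)
    {c₁ c₂ : Fin (n + 1) → ℤ} (hC : CSet n b J₁ c₁ ⊆ CSet n b J₂ c₂) :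
    ∀ j ∈ J₂, j ∈ J₁ ∧ c₂ j ≤ c₁ j := by
  intro j hj
  by_contra! h
  obtain ⟨x, hx, hxj⟩ : ∃ x ∈ CSet n b J₁ c₁, ⟪x, b j⟫ = c₂ j := by
    by_cases hjl : j = Fin.last n
    · subst hjl
      obtain ⟨k, hkI, hkJ⟩ := not_subset.mp hJ₁
      exact exists_mem_CSet_inner_last_eq hn'n hb hspan hlast (mem_sdiff.mpr ⟨hkI, hkJ⟩)
        (hα k hkI) _ fun hl => by exact_mod_cast h hl
    · obtain ⟨k, hkI, hkJ⟩ := not_subset.mp hJ₂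
      exact exists_mem_CSet_inner_eq hn'n hb hspan hlast hjl hkI
        (ne_of_mem_of_not_mem hj hkJ).symm (hα k hkI) _ fun hl => by exact_mod_cast h hl
  exact (hC hx j hj).ne' hxj

lemma sum_Iprime_eq_add_sum_inter_add_sum_sdiff {M : Type*} [AddCommMonoid M]
    {J : Finset (Fin (n + 1))} {i₀ : Fin (n + 1)} (hi₀ : i₀ ∈ Iprime n n' \ J)
    (f : Fin (n + 1) → M) :
    ∑ i ∈ Iprime n n', f i
      = f i₀ + (∑ i ∈ Iprime n n' ∩ J, f i + ∑ i ∈ (Iprime n n' \ J).erase i₀, f i) := by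
  obtain ⟨hi₀I, hi₀J⟩ := mem_sdiff.mp hi₀
  rw [← add_sum_erase _ _ hi₀I, ← sum_inter_add_sum_sdiff ((Iprime n n').erase i₀) J,
    erase_sdiff_comm, erase_inter, erase_eq_of_notMem fun h => hi₀J (mem_inter.mp h).2]

lemma ceilB_le_iff {J : Finset (Fin (n + 1))} {i₀ : Fin (n + 1)} (hi₀ : i₀ ∈ Iprime n n' \ J)
    (hα₀ : 0 < α i₀) {c m L : Fin (n + 1) → ℤ} (hJ : ∀ i ∈ Iprime n n' ∩ J, c i + m i = L i)
    (hJc : ∀ i ∈ (Iprime n n' \ J).erase i₀, m i = L i) :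
    ceilB n n' α J i₀ c m ≤ L i₀ ↔
      (c (Fin.last n) : ℚ) ≤ ∑ i ∈ Iprime n n', α i * L i := by
  have hsJ : ∑ i ∈ Iprime n n' ∩ J, α i * ((c i : ℚ) + m i)
      = ∑ i ∈ Iprime n n' ∩ J, α i * L i :=
    sum_congr rfl fun i hi => by rw [← hJ i hi, Int.cast_add]
  have hsJc : ∑ i ∈ (Iprime n n' \ J).erase i₀, α i * (m i : ℚ)
      = ∑ i ∈ (Iprime n n' \ J).erase i₀, α i * L i :=
    sum_congr rfl fun i hi => by rw [hJc i hi]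
  rw [ceilB, Int.ceil_le, div_le_iff₀ hα₀, sum_Iprime_eq_add_sum_inter_add_sum_sdiff hi₀, hsJ,
    hsJc]
  constructor <;> intro h <;> linarith

def boxUnion (n n' : ℕ) (b : Fin (n + 1) → E n) (α : Fin (n + 1) → ℚ)
    (J : Finset (Fin (n + 1))) (c : Fin (n + 1) → ℤ) : Set (E n) :=
  {x | (∀ i ∈ (J \ Iprime n n').erase (Fin.last n), (c i : ℝ) < ⟪x, b i⟫) ∧
    ∃ L : Fin (n + 1) → ℤ, (∀ i ∈ Iprime n n' ∩ J, c i ≤ L i) ∧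
      (c (Fin.last n) : ℚ) ≤ ∑ i ∈ Iprime n n', α i * L i ∧
      ∀ i ∈ Iprime n n', (L i : ℝ) < ⟪x, b i⟫}

lemma FSetB_eq_boxUnion {J : Finset (Fin (n + 1))} {i₀ : Fin (n + 1)}
    (hi₀ : i₀ ∈ Iprime n n' \ J) (hα₀ : 0 < α i₀) (c : Fin (n + 1) → ℤ) :
    FSetB n n' b α J i₀ c = boxUnion n n' b α J c := by
  have hi₀J := (mem_sdiff.mp hi₀).2
  ext x
  constructor
  · rintro ⟨m, hm, hJ, hJc, hrest, hi₀x⟩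
    set L : Fin (n + 1) → ℤ := fun i =>
      if i ∈ J then c i + m i else if i = i₀ then ceilB n n' α J i₀ c m else m i
    have hLJ : ∀ i ∈ Iprime n n' ∩ J, c i + m i = L i := fun i hi => by
      simp [L, (mem_inter.mp hi).2]
    have hLJc : ∀ i ∈ (Iprime n n' \ J).erase i₀, m i = L i := fun i hi => by
      obtain ⟨hii₀, hi⟩ := mem_erase.mp hi
      simp [L, (mem_sdiff.mp hi).2, hii₀]
    refine ⟨hrest, L, fun i hi => ?_, (ceilB_le_iff hi₀ hα₀ hLJ hLJc).mp (by simp [L, hi₀J]),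
      fun i hi => ?_⟩
    · linarith [hLJ i hi, hm i hi]
    · by_cases hiJ : i ∈ J
      · simpa [L, hiJ] using hJ i (mem_inter.mpr ⟨hi, hiJ⟩)
      · by_cases hii₀ : i = i₀
        · subst hii₀
          simpa [L, hiJ] using hi₀x
        · simpa [L, hiJ, hii₀] using hJc i (mem_erase.mpr ⟨hii₀, mem_sdiff.mpr ⟨hi, hiJ⟩⟩)
  · rintro ⟨hrest, L, hcL, hsum, hL⟩
    set m : Fin (n + 1) → ℤ := fun i => if i ∈ J then L i - c i else L i
    have hLJ : ∀ i ∈ Iprime n n' ∩ J, c i + m i = L i := fun i hi => by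
      simp [m, (mem_inter.mp hi).2]
    have hLJc : ∀ i ∈ (Iprime n n' \ J).erase i₀, m i = L i := fun i hi => by
      simp [m, (mem_sdiff.mp (mem_of_mem_erase hi)).2]
    refine ⟨m, fun i hi => by linarith [hLJ i hi, hcL i hi], fun i hi => ?_, fun i hi => ?_,
      hrest, ?_⟩
    · exact_mod_cast hLJ i hi ▸ hL i (mem_inter.mp hi).1
    · exact_mod_cast hLJc i hi ▸ hL i (mem_sdiff.mp (mem_of_mem_erase hi)).1
    · exact lt_of_le_of_lt (by exact_mod_cast (ceilB_le_iff hi₀ hα₀ hLJ hLJc).mpr hsum)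
        (hL i₀ (mem_sdiff.mp hi₀).1)

lemma boxUnion_subset_CSet (hlast : b (Fin.last n) = ∑ i ∈ Iprime n n', (α i : ℝ) • b i)
    (hα : ∀ i ∈ Iprime n n', 0 < α i) (hI' : (Iprime n n').Nonempty)
    (J : Finset (Fin (n + 1))) (c : Fin (n + 1) → ℤ) :
    boxUnion n n' b α J c ⊆ CSet n b J c := by
  rintro x ⟨hrest, L, hcL, hsum, hL⟩ i hi
  by_cases hiI : i ∈ Iprime n n'
  · exact lt_of_le_of_lt (by exact_mod_cast hcL i (mem_inter.mpr ⟨hiI, hi⟩)) (hL i hiI)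
  by_cases hil : i = Fin.last n
  · subst hil
    have hsum' : (c (Fin.last n) : ℝ) ≤ ∑ i ∈ Iprime n n', (α i : ℝ) * L i := by
      exact_mod_cast hsum
    rw [inner_last hlast]
    refine lt_of_le_of_lt hsum' (sum_lt_sum_of_nonempty hI' fun j hj => ?_)
    exact mul_lt_mul_of_pos_left (hL j hj) (by exact_mod_cast hα j hj)
  · exact hrest i (mem_erase.mpr ⟨hil, mem_sdiff.mpr ⟨hi, hiI⟩⟩)

lemma boxUnion_mono {J₁ J₂ : Finset (Fin (n + 1))} {c₁ c₂ : Fin (n + 1) → ℤ}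
    (hJ : ∀ j ∈ J₂, j ∈ J₁ ∧ c₂ j ≤ c₁ j) (hl : Fin.last n ∈ J₂) :
    boxUnion n n' b α J₁ c₁ ⊆ boxUnion n n' b α J₂ c₂ := by
  rintro x ⟨hrest, L, hcL, hsum, hL⟩
  refine ⟨fun i hi => ?_, L, fun i hi => ?_, ?_, hL⟩
  · obtain ⟨hil, hi⟩ := mem_erase.mp hi
    obtain ⟨hiJ, hiI⟩ := mem_sdiff.mp hi
    have := hrest i (mem_erase.mpr ⟨hil, mem_sdiff.mpr ⟨(hJ i hiJ).1, hiI⟩⟩)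
    exact lt_of_le_of_lt (by exact_mod_cast (hJ i hiJ).2) this
  · obtain ⟨hiI, hiJ⟩ := mem_inter.mp hi
    exact (hJ i hiJ).2.trans (hcL i (mem_inter.mpr ⟨hiI, (hJ i hiJ).1⟩))
  · exact le_trans (by exact_mod_cast (hJ _ hl).2) hsum

end

theorem stmt11_general (n n' : ℕ) (hn'n : n' ≤ n)
    (b : Fin (n + 1) → E n) (α : Fin (n + 1) → ℚ)
    (hb : LinearIndependent ℝ fun i : Fin n => b i.castSucc)
    (hspan : Submodule.span ℝ (Set.range fun i : Fin n => b i.castSucc) = ⊤)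
    (hα : ∀ i : Fin (n + 1), i.val < n' → 0 < α i)
    (hlast : b (Fin.last n) = ∑ i ∈ Iprime n n', (α i : ℝ) • b i)
    (J₁ J₂ : Finset (Fin (n + 1)))
    (hJ₁I : ¬ Iprime n n' ⊆ J₁)
    (hJ₂I : ¬ Iprime n n' ⊆ J₂)
    (i₁₀ i₂₀ : Fin (n + 1))
    (hi₁₀ : Fin.last n ∈ J₁ → i₁₀ ∈ Iprime n n' \ J₁)
    (hi₂₀ : Fin.last n ∈ J₂ → i₂₀ ∈ Iprime n n' \ J₂)
    (c₁ c₂ : Fin (n + 1) → ℤ)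
    (hC : CSet n b J₁ c₁ ⊆ CSet n b J₂ c₂) :
    FSetB' n n' b α J₁ i₁₀ c₁ ⊆ FSetB' n n' b α J₂ i₂₀ c₂ := by
  have hα' : ∀ i ∈ Iprime n n', 0 < α i := fun i hi => hα i (mem_Iprime.mp hi)
  have hJ := mem_and_le_of_CSet_subset hn'n hb hspan hlast hα' hJ₁I hJ₂I hC
  have hF : ∀ {J i₀} (c : Fin (n + 1) → ℤ), i₀ ∈ Iprime n n' \ J →
      FSetB n n' b α J i₀ c = boxUnion n n' b α J c := fun c hi₀ =>
    FSetB_eq_boxUnion hi₀ (hα' _ (mem_sdiff.mp hi₀).1) c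
  unfold FSetB'
  split_ifs with h₁ h₂ h₂
  · rw [hF c₁ (hi₁₀ h₁), hF c₂ (hi₂₀ h₂)]
    exact boxUnion_mono hJ h₂
  · rw [hF c₁ (hi₁₀ h₁)]
    exact (boxUnion_subset_CSet hlast hα' ⟨i₁₀, (mem_sdiff.mp (hi₁₀ h₁)).1⟩ J₁ c₁).trans hC
  · exact absurd (hJ _ h₂).1 h₁
  · exact hC

/-- Setup B: for `J₁, J₂ ∈ Λ` with integer data `c¹, c²` (and a choice
of `i₀ ∈ I'∖J` for each of `J₁, J₂` that contains `n+1`): if `C(J₁,c¹) ⊆ C(J₂,c²)`,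
then `F(J₁,c¹) ⊆ F(J₂,c²)`. -/
theorem stmt11 (n n' : ℕ) (hn'1 : 1 ≤ n') (hn'n : n' ≤ n)
    (b : Fin (n + 1) → E n) (α : Fin (n + 1) → ℚ)
    (hb : LinearIndependent ℝ fun i : Fin n => b i.castSucc)
    (hspan : Submodule.span ℝ (Set.range fun i : Fin n => b i.castSucc) = ⊤)
    (hα : ∀ i : Fin (n + 1), i.val < n' → 0 < α i)
    (hαsum : ∑ i ∈ Iprime n n', α i ≤ 1)
    (hlast : b (Fin.last n) = ∑ i ∈ Iprime n n', (α i : ℝ) • b i)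
    (J₁ J₂ : Finset (Fin (n + 1)))
    (hJ₁ne : J₁ ≠ Finset.univ) (hJ₁I : ¬ Iprime n n' ⊆ J₁)
    (hJ₂ne : J₂ ≠ Finset.univ) (hJ₂I : ¬ Iprime n n' ⊆ J₂)
    (i₁₀ i₂₀ : Fin (n + 1))
    (hi₁₀ : Fin.last n ∈ J₁ → i₁₀ ∈ Iprime n n' \ J₁)
    (hi₂₀ : Fin.last n ∈ J₂ → i₂₀ ∈ Iprime n n' \ J₂)
    (c₁ c₂ : Fin (n + 1) → ℤ)
    (hC : CSet n b J₁ c₁ ⊆ CSet n b J₂ c₂) :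
    FSetB' n n' b α J₁ i₁₀ c₁ ⊆ FSetB' n n' b α J₂ i₂₀ c₂ :=
  stmt11_general n n' hn'n b α hb hspan hα hlast J₁ J₂ hJ₁I hJ₂I i₁₀ i₂₀ hi₁₀ hi₂₀ c₁ c₂ hC
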